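/- arXiv:1211.0141 — 4 statements merged into one kernel-verified Lean document; each statement's English description precedes it below -/
import Mathlib

section
/- Every Hamiltonian graph G of order n ≥ 3 satisfies rc(G) ≤ ⌈n/2⌉. -/
open SimpleGraph

def IsRainbowColoring {V α : Type*} (G : SimpleGraph V) (c : Sym2 V → α) : Prop :=
  ∀ u v : V, ∃ p : G.Walk u v, p.IsPath ∧ (p.edges.map c).Nodup

noncomputable def rc {V : Type*} (G : SimpleGraph V) : ℕ :=
  sInf {t : ℕ | ∃ c : Sym2 V → Fin t, IsRainbowColoring G c}

def IsBlock {V : Type*} (G : SimpleGraph V) (B : Set V) : Prop :=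
  ((G.induce B).Connected ∧ ∀ v ∈ B, B ≠ {v} → (G.induce (B \ {v})).Connected) ∧
  ∀ B' : Set V, B ⊆ B' →
    ((G.induce B').Connected ∧ ∀ v ∈ B', B' ≠ {v} → (G.induce (B' \ {v})).Connected) →
    B' = B

def TwoConnected {V : Type*} (G : SimpleGraph V) : Prop :=
  G.Connected ∧ ∀ v : V, (G.induce {u | u ≠ v}).Connected

def TwoEdgeConnected {V : Type*} (G : SimpleGraph V) : Prop :=
  G.Connected ∧ ∀ e ∈ G.edgeSet, (G.deleteEdges {e}).Connected

/-! Colour the `i`-th edge of a Hamiltonian cycle by `i mod ⌈n/2⌉`. Two vertices split the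
cycle into two arcs, the shorter of which has at most `⌊n/2⌋` edges. The edges of an arc have
cyclically consecutive indices, and at most `⌊n/2⌋` cyclically consecutive residues modulo `n`
stay distinct modulo `⌈n/2⌉`, so the shorter arc is a rainbow path. -/

lemma Nat.mod_eq_or_eq_sub_of_lt_two_mul {x m : ℕ} (h : x < 2 * m) :
    x < m ∧ x % m = x ∨ m ≤ x ∧ x % m = x - m := by
  rcases Nat.lt_or_ge x m with hx | hx
  · exact .inl ⟨hx, Nat.mod_eq_of_lt hx⟩
  · exact .inr ⟨hx, by rw [Nat.mod_eq_sub_mod hx, Nat.mod_eq_of_lt (by omega)]⟩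

lemma Nat.eq_of_add_mod_mod_half_eq {n s a b : ℕ} (ha : a < n / 2) (hb : b < n / 2)
    (h : (a + s) % n % ((n + 1) / 2) = (b + s) % n % ((n + 1) / 2)) : a = b := by
  wlog hab : a ≤ b generalizing a b
  · exact (this hb ha h.symm (by omega)).symm
  obtain ⟨d, rfl⟩ := Nat.exists_eq_add_of_le hab
  rw [show a + d + s = a + s + d by ring, ← Nat.mod_add_mod (a + s) n d] at h
  have hx : (a + s) % n < n := Nat.mod_lt _ (by omega)
  generalize (a + s) % n = x at h hx
  have hy := Nat.mod_eq_or_eq_sub_of_lt_two_mul (m := n) (x := x + d) (by omega)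
  generalize (x + d) % n = y at h hy
  have hxk := Nat.mod_eq_or_eq_sub_of_lt_two_mul (m := (n + 1) / 2) (x := x) (by omega)
  have hyk := Nat.mod_eq_or_eq_sub_of_lt_two_mul (m := (n + 1) / 2) (x := y) (by omega)
  omega

theorem List.Nodup.nodup_map_idxOf_mod_of_prefix_rotate {α : Type*} [DecidableEq α]
    {L E : List α} (hL : L.Nodup) {m : ℕ} (hE : E <+: L.rotate m)
    (hlen : E.length ≤ L.length / 2) :
    (E.map fun e => L.idxOf e % ((L.length + 1) / 2)).Nodup := by
  have hidx (i : ℕ) (hi : i < E.length) : L.idxOf E[i] = (i + m) % L.length := by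
    rw [hE.getElem, List.getElem_rotate, hL.idxOf_getElem]
  rw [List.nodup_iff_injective_get]
  rintro ⟨i, hi⟩ ⟨j, hj⟩ hij
  rw [List.length_map] at hi hj
  simp only [List.get_eq_getElem, List.getElem_map, hidx] at hij
  exact Fin.ext (Nat.eq_of_add_mod_mod_half_eq (a := i) (b := j) (by omega) (by omega) hij)

namespace SimpleGraph.Walk

variable {V : Type*} {G : SimpleGraph V} {u v w : V}

theorem IsCycle.exists_isPath_nodup_map_edges [DecidableEq V] {c : G.Walk v v} (hc : c.IsCycle)
    {α : Type*} (f : Sym2 V → α)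
    (hf : ∀ m E, E <+: c.edges.rotate m → E.length ≤ c.length / 2 → (E.map f).Nodup)
    (hu : u ∈ c.support) (hw : w ∈ c.support) :
    ∃ p : G.Walk u w, p.IsPath ∧ (p.edges.map f).Nodup := by
  rcases eq_or_ne u w with rfl | huw
  · exact ⟨nil, .nil, by simp⟩
  set q := c.rotate u hu
  have hq : q.IsCycle := hc.rotate hu
  have hwq : w ∈ q.support := (c.mem_support_rotate_iff u hu).2 hw
  obtain ⟨m, hm⟩ := (c.rotate_edges u hu).symm
  set t := q.takeUntil w hwq
  set d := q.dropUntil w hwq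
  have hspec : t.append d = q := q.take_spec hwq
  have hedges : c.edges.rotate m = t.edges ++ d.edges := by rw [hm, ← edges_append, hspec]
  have hlen : t.length + d.length = c.length := by
    rw [← length_append, hspec, length_rotate]
  by_cases ht : t.length ≤ c.length / 2
  · refine ⟨t, hq.isPath_takeUntil hwq, hf m _ ?_ (by rwa [length_edges])⟩
    exact hedges ▸ List.prefix_append _ _
  · have htd : (t.append d).IsCycle := hspec ▸ hq
    refine ⟨d.reverse, (htd.isPath_of_append_right (not_nil_of_ne huw)).reverse, ?_⟩
    rw [edges_reverse, List.map_reverse, List.nodup_reverse]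
    refine hf (m + t.edges.length) _ ?_ (by rw [length_edges]; omega)
    rw [← List.rotate_rotate, hedges, List.rotate_append_length_eq]
    exact List.prefix_append _ _

theorem IsHamiltonianCycle.rc_le [Fintype V] [DecidableEq V] {c : G.Walk v v}
    (hc : c.IsHamiltonianCycle) : rc G ≤ (Fintype.card V + 1) / 2 := by
  have hlen : c.edges.length = Fintype.card V := by rw [length_edges, hc.length_eq]
  have hk : 0 < (c.edges.length + 1) / 2 := by
    rw [length_edges]
    have := hc.isCycle.three_le_length
    omega
  let f : Sym2 V → Fin ((c.edges.length + 1) / 2) := fun e =>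
    ⟨c.edges.idxOf e % _, Nat.mod_lt _ hk⟩
  rw [← hlen]
  refine Nat.sInf_le ⟨f, fun x y => hc.isCycle.exists_isPath_nodup_map_edges f ?_
    (hc.mem_support x) (hc.mem_support y)⟩
  intro m E hE hElen
  refine List.Nodup.of_map Fin.val ?_
  rw [List.map_map]
  exact hc.isCycle.edges_nodup.nodup_map_idxOf_mod_of_prefix_rotate hE (by rwa [length_edges])

end SimpleGraph.Walk

theorem rc_hamiltonian {V : Type*} [Fintype V] [DecidableEq V] (G : SimpleGraph V)
    (hn : 3 ≤ Fintype.card V) (hham : G.IsHamiltonian) :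
    rc G ≤ (Fintype.card V + 1) / 2 := by
  obtain ⟨_, c, hc⟩ := hham (by omega)
  exact hc.rc_le
end

section
/- If a 2-edge-connected graph G of order n has r even blocks in its block decomposition, then r ≤ (n − 1)/3. -/
open SimpleGraph

/-!
Choose a spanning tree `T` of `G`. A path between two vertices of a block never leaves the block
(otherwise the block together with the path would be a larger nonseparable set), so `T` restricted
to a block `B` is connected and therefore contains at least `|B| - 1` edges of `T`. Two blocks share
at most one vertex, so these edge sets are disjoint, and `T` has `n - 1` edges in total. Finally a
block with two vertices is a single edge, which in a 2-edge-connected graph lies on a cycle and so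
cannot be a block; hence every even block has at least four vertices and contributes at least three
edges of `T`.
-/

open scoped Finset

namespace SimpleGraph

variable {V : Type*} {G : SimpleGraph V} {A B : Set V} {u v x t : V}

/-- `IsBlock G B` says that `B` is a maximal nonseparable set. -/
def IsNonseparable (G : SimpleGraph V) (B : Set V) : Prop :=
  (G.induce B).Connected ∧ ∀ v ∈ B, B ≠ {v} → (G.induce (B \ {v})).Connected

theorem IsNonseparable.connected_diff_singleton (hB : G.IsNonseparable B) (hnt : B.Nontrivial)
    (t : V) : (G.induce (B \ {t})).Connected := by
  by_cases ht : t ∈ B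
  · exact hB.2 t ht hnt.ne_singleton
  · rw [Set.sdiff_singleton_eq_self ht]
    exact hB.1

theorem IsNonseparable.union (hA : G.IsNonseparable A) (hB : G.IsNonseparable B)
    (hAB : (A ∩ B).Nontrivial) : G.IsNonseparable (A ∪ B) := by
  obtain ⟨x, hx, y, hy, hxy⟩ := hAB
  refine ⟨induce_union_connected hA.1.preconnected hB.1.preconnected ⟨x, hx⟩,
    fun t _ _ => ?_⟩
  rw [Set.union_sdiff_distrib]
  refine induce_union_connected
    (hA.connected_diff_singleton ⟨x, hx.1, y, hy.1, hxy⟩ t).preconnected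
    (hB.connected_diff_singleton ⟨x, hx.2, y, hy.2, hxy⟩ t).preconnected ?_
  by_cases hxt : x = t
  · exact ⟨y, ⟨hy.1, (hxt ▸ hxy).symm⟩, hy.2, (hxt ▸ hxy).symm⟩
  · exact ⟨x, ⟨hx.1, hxt⟩, hx.2, hxt⟩

theorem Walk.adj_of_support_subset_pair (huv : u ≠ v) (p : G.Walk u v)
    (hp : ∀ x ∈ p.support, x ∈ ({u, v} : Set V)) : G.Adj u v := by
  cases p with
  | nil => exact absurd rfl huv
  | cons h q =>
    rcases hp _ (List.mem_cons_of_mem _ q.start_mem_support) with hw | hw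
    · exact absurd hw h.ne'
    · exact hw ▸ h

theorem Walk.IsPath.notMem_takeUntil_or_dropUntil [DecidableEq V] {p : G.Walk u v}
    (hp : p.IsPath) (hx : x ∈ p.support) (hxt : x ≠ t) :
    t ∉ (p.takeUntil x hx).support ∨ t ∉ (p.dropUntil x hx).support := by
  by_contra! h
  have hnodup := hp.support_nodup
  rw [← p.take_spec hx, Walk.support_append, List.nodup_append] at hnodup
  obtain ⟨h_take, h_drop⟩ := h
  rw [← Walk.cons_tail_support, List.mem_cons] at h_drop
  exact hnodup.2.2 t h_take t (h_drop.resolve_left hxt.symm) rfl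

theorem IsNonseparable.union_support (hB : G.IsNonseparable B) (hnt : B.Nontrivial)
    (hu : u ∈ B) (hv : v ∈ B) {p : G.Walk u v} (hp : p.IsPath) :
    G.IsNonseparable (B ∪ {x | x ∈ p.support}) := by
  classical
  refine ⟨induce_union_connected hB.1.preconnected p.connected_induce_support.preconnected
    ⟨u, hu, p.start_mem_support⟩, fun t _ _ => ?_⟩
  set S := (B ∪ {x | x ∈ p.support}) \ {t}
  have hBS : B \ {t} ⊆ S := Set.sdiff_subset_sdiff_left Set.subset_union_left
  have hBt := hB.connected_diff_singleton hnt t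
  obtain ⟨a, ha⟩ := hBt.nonempty
  have reach_B :
      ∀ b (hb : b ∈ B \ {t}), (G.induce S).Reachable ⟨a, hBS ha⟩ ⟨b, hBS hb⟩ :=
    fun b hb => (hBt.preconnected ⟨a, ha⟩ ⟨b, hb⟩).map (induceHomOfLE _ hBS).toHom
  have mem_S : ∀ y ∈ p.support, y ≠ t → y ∈ S := fun y hy hyt => ⟨Or.inr hy, hyt⟩
  rw [connected_iff_exists_forall_reachable]
  refine ⟨⟨a, hBS ha⟩, ?_⟩
  rintro ⟨x, hxB | hxp, hxt⟩
  · exact reach_B x ⟨hxB, hxt⟩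
  -- `x` is joined to `u` or to `v` by a segment of `p` that avoids `t`
  rcases hp.notMem_takeUntil_or_dropUntil hxp hxt with h | h
  · have hu' : u ∈ B \ {t} :=
      ⟨hu, ne_of_mem_of_not_mem (p.takeUntil x hxp).start_mem_support h⟩
    exact (reach_B u hu').trans ⟨(p.takeUntil x hxp).induce S fun y hy =>
      mem_S y (p.support_takeUntil_subset_support hxp hy) (ne_of_mem_of_not_mem hy h)⟩
  · have hv' : v ∈ B \ {t} :=
      ⟨hv, ne_of_mem_of_not_mem (p.dropUntil x hxp).end_mem_support h⟩
    exact (reach_B v hv').trans (Reachable.symm ⟨(p.dropUntil x hxp).induce S fun y hy =>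
      mem_S y (p.support_dropUntil_subset_support hxp hy) (ne_of_mem_of_not_mem hy h)⟩)

theorem Connected.ncard_sub_one_le_card_edgeFinset_inter_sym2 [Fintype V] [DecidableEq V]
    [DecidableRel G.Adj] [DecidablePred (· ∈ B)] (h : (G.induce B).Connected) :
    B.ncard - 1 ≤ #(G.edgeFinset ∩ B.toFinset.sym2) := by
  have hcard := h.card_vert_le_card_edgeSet_add_one
  rw [Nat.card_coe_set_eq, Nat.card_eq_fintype_card, ← edgeFinset_card] at hcard
  rw [← map_edgeFinset_induce, Finset.card_map]
  omega

theorem disjoint_edgeFinset_inter_sym2 [Fintype V] [DecidableEq V] [DecidableRel G.Adj]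
    [DecidablePred (· ∈ A)] [DecidablePred (· ∈ B)] (hAB : (A ∩ B).Subsingleton) :
    Disjoint (G.edgeFinset ∩ A.toFinset.sym2) (G.edgeFinset ∩ B.toFinset.sym2) := by
  rw [Finset.disjoint_left]
  intro e heA heB
  induction e using Sym2.ind with
  | _ x y =>
    simp only [Finset.mem_inter, mem_edgeFinset, mem_edgeSet, Finset.mk_mem_sym2_iff,
      Set.mem_toFinset] at heA heB
    exact heA.1.ne (hAB ⟨heA.2.1, heB.2.1⟩ ⟨heA.2.2, heB.2.2⟩)

theorem sum_ncard_sub_one_le_card_edgeFinset [Fintype V] [DecidableEq V] [DecidableRel G.Adj]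
    (𝓑 : Finset (Set V)) (hconn : ∀ B ∈ 𝓑, (G.induce B).Connected)
    (hinter : (𝓑 : Set (Set V)).Pairwise fun A B => (A ∩ B).Subsingleton) :
    ∑ B ∈ 𝓑, (B.ncard - 1) ≤ #G.edgeFinset := by
  classical
  let inside : Set V → Finset (Sym2 V) := fun B => G.edgeFinset ∩ B.toFinset.sym2
  calc ∑ B ∈ 𝓑, (B.ncard - 1)
      ≤ ∑ B ∈ 𝓑, #(inside B) :=
        Finset.sum_le_sum fun B hB => (hconn B hB).ncard_sub_one_le_card_edgeFinset_inter_sym2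
    _ = #(𝓑.biUnion inside) := (Finset.card_biUnion fun A hA B hB hAB =>
        disjoint_edgeFinset_inter_sym2 (hinter hA hB hAB)).symm
    _ ≤ #G.edgeFinset :=
        Finset.card_le_card (Finset.biUnion_subset.2 fun _ _ => Finset.inter_subset_left)

end SimpleGraph

section Blocks

variable {V : Type*} {G H : SimpleGraph V} {A B : Set V} {u v : V}

theorem IsBlock.isNonseparable (hB : IsBlock G B) : G.IsNonseparable B := hB.1

theorem IsBlock.eq_of_subset {B' : Set V} (hB : IsBlock G B) (h : B ⊆ B')
    (hB' : G.IsNonseparable B') : B' = B :=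
  hB.2 B' h hB'

theorem IsBlock.inter_subsingleton (hA : IsBlock G A) (hB : IsBlock G B) (hAB : A ≠ B) :
    (A ∩ B).Subsingleton := by
  by_contra h
  have hU := hA.isNonseparable.union hB.isNonseparable (Set.not_subsingleton_iff.mp h)
  exact hAB ((hA.eq_of_subset Set.subset_union_left hU).symm.trans
    (hB.eq_of_subset Set.subset_union_right hU))

theorem IsBlock.support_subset_of_isPath (hB : IsBlock G B) (hnt : B.Nontrivial) (hu : u ∈ B)
    (hv : v ∈ B) (hHG : H ≤ G) {p : H.Walk u v} (hp : p.IsPath) :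
    ∀ x ∈ p.support, x ∈ B := by
  have hB' := hB.eq_of_subset Set.subset_union_left
    (hB.isNonseparable.union_support hnt hu hv ((Walk.isPath_mapLe hHG).mpr hp))
  rw [Walk.support_mapLe_eq_support] at hB'
  exact fun x hx => hB' ▸ Or.inr hx

theorem IsBlock.induce_connected_of_le (hB : IsBlock G B) (hnt : B.Nontrivial) (hHG : H ≤ G)
    (hH : H.Connected) : (H.induce B).Connected := by
  obtain ⟨x, hx⟩ := hnt.nonempty
  rw [connected_iff_exists_forall_reachable]
  refine ⟨⟨x, hx⟩, fun ⟨y, hy⟩ => ?_⟩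
  obtain ⟨p, hp⟩ := (hH.preconnected x y).exists_isPath
  exact ⟨p.induce B (hB.support_subset_of_isPath hnt hx hy hHG hp)⟩

theorem IsBlock.ncard_ne_two (hB : IsBlock G B) (hG : ∀ e ∈ G.edgeSet, ¬G.IsBridge e) :
    B.ncard ≠ 2 := by
  intro h
  obtain ⟨a, b, hab, rfl⟩ := Set.ncard_eq_two.mp h
  have pair_adj {H : SimpleGraph V} (hHG : H ≤ G) (hr : H.Reachable a b) : H.Adj a b := by
    obtain ⟨p, hp⟩ := hr.exists_isPath
    exact p.adj_of_support_subset_pair hab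
      (hB.support_subset_of_isPath (Set.nontrivial_pair hab) (by simp) (by simp) hHG hp)
  have hadj : G.Adj a b := pair_adj le_rfl <|
    (hB.isNonseparable.1.preconnected ⟨a, by simp⟩ ⟨b, by simp⟩).map
      (Embedding.induce _).toHom
  have := pair_adj (G.deleteEdges_le _) (not_not.mp (isBridge_iff.not.mp (hG _ hadj)))
  simp at this

theorem IsBlock.four_le_ncard_of_even [Finite V] (hB : IsBlock G B)
    (hG : ∀ e ∈ G.edgeSet, ¬G.IsBridge e) (heven : Even B.ncard) : 4 ≤ B.ncard := by
  have hpos : 0 < B.ncard :=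
    (Set.ncard_pos B.toFinite).mpr (Set.nonempty_coe_sort.mp hB.isNonseparable.1.nonempty)
  have := hB.ncard_ne_two hG
  obtain ⟨k, hk⟩ := heven
  omega

end Blocks

theorem TwoEdgeConnected.not_isBridge {V : Type*} {G : SimpleGraph V} (h : TwoEdgeConnected G)
    {e : Sym2 V} (he : e ∈ G.edgeSet) : ¬G.IsBridge e := by
  induction e using Sym2.ind with
  | _ x y =>
    rw [isBridge_iff, not_not]
    exact (h.2 _ he).preconnected x y

theorem even_blocks_bound_general {V : Type*} [Fintype V] (G : SimpleGraph V)
    (h2 : TwoEdgeConnected G) (r : ℕ)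
    (hr : {B : Set V | IsBlock G B ∧ Even B.ncard}.ncard = r) :
    3 * r ≤ Fintype.card V - 1 := by
  classical
  obtain ⟨T, hTG, hT⟩ := h2.1.exists_isTree_le
  let 𝓑 := {B : Set V | IsBlock G B ∧ Even B.ncard}.toFinset
  have hcard : #𝓑 = r := by rw [← hr, Set.ncard_eq_toFinset_card']
  have four_le : ∀ B ∈ 𝓑, 4 ≤ B.ncard := fun B hB =>
    (Set.mem_toFinset.mp hB).1.four_le_ncard_of_even (fun _ => h2.not_isBridge)
      (Set.mem_toFinset.mp hB).2
  have hconn : ∀ B ∈ 𝓑, (T.induce B).Connected := fun B hB =>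
    (Set.mem_toFinset.mp hB).1.induce_connected_of_le
      (Set.one_lt_ncard_iff_nontrivial.mp (by linarith [four_le B hB])) hTG hT.1
  have hinter : (𝓑 : Set (Set V)).Pairwise fun A B => (A ∩ B).Subsingleton :=
    fun A hA B hB hAB =>
      (Set.mem_toFinset.mp hA).1.inter_subsingleton (Set.mem_toFinset.mp hB).1 hAB
  calc 3 * r = ∑ _B ∈ 𝓑, 3 := by rw [Finset.sum_const, smul_eq_mul, hcard, mul_comm]
    _ ≤ ∑ B ∈ 𝓑, (B.ncard - 1) :=
        Finset.sum_le_sum fun B hB => by have := four_le B hB; omega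
    _ ≤ #T.edgeFinset := T.sum_ncard_sub_one_le_card_edgeFinset 𝓑 hconn hinter
    _ = Fintype.card V - 1 := by rw [← hT.card_edgeFinset, Nat.add_sub_cancel]

theorem even_blocks_bound {V : Type*} [Fintype V] (G : SimpleGraph V)
    (hn : 2 ≤ Fintype.card V) (h2 : TwoEdgeConnected G) (r : ℕ)
    (hr : {B : Set V | IsBlock G B ∧ Even B.ncard}.ncard = r) :
    3 * r ≤ Fintype.card V - 1 :=
  even_blocks_bound_general G h2 r hr
end

section
/- For every k ≥ 1 there is a 2-edge-connected graph of order 3k+1 (namely a chain of k triangles sharing cut vertices consecutively) whose rainbow connection number equals 2k. -/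
open SimpleGraph

/-!
The graph is a chain of `k` four-cycles glued at the cut vertices `0, 3, …, 3k`; every edge lies
on one of these cycles, so none is a bridge. Colour the two pairs of opposite edges of the `i`-th
cycle with `2i` and `2i + 1`. Walking forward from the smaller to the larger of two vertices the
colours then strictly increase (the two middle vertices of one cycle are joined through its cut
vertex instead), so `2k` colours suffice. Conversely the level `⌊(2v + 1) / 3⌋` changes by at most
one along an edge, so a path from `0` to `3k` has at least `2k` edges, all coloured differently.
-/

namespace SimpleGraph

variable {V : Type*} {G : SimpleGraph V}

lemma Walk.le_add_length_of_adj {f : V → ℕ} (hf : ∀ x y, G.Adj x y → f y ≤ f x + 1)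
    {u v : V} (p : G.Walk u v) : f v ≤ f u + p.length := by
  induction p with
  | nil => simp
  | cons h _ ih => have := hf _ _ h; rw [Walk.length_cons]; omega

lemma not_isBridge_of_adj_of_adj_of_adj {a b c d : V} (hab : G.Adj a b) (hbc : G.Adj b c)
    (hcd : G.Adj c d) (hac : a ≠ c) (hbd : b ≠ d) : ¬ G.IsBridge s(a, d) := by
  rw [isBridge_iff_forall_walk_mem_edges, not_forall]
  refine ⟨.cons hab (.cons hbc (.cons hcd .nil)), ?_⟩
  simp [hab.ne, hcd.ne.symm, hac, hbd.symm]

lemma isRainbowColoring_of_forall_lt {α : Type*} [LinearOrder V] {c : Sym2 V → α}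
    (h : ∀ u v, u < v → ∃ p : G.Walk u v, (p.edges.map c).Nodup) : IsRainbowColoring G c := by
  classical
  have of_walk {u v : V} (p : G.Walk u v) (hp : (p.edges.map c).Nodup) :
      ∃ q : G.Walk u v, q.IsPath ∧ (q.edges.map c).Nodup :=
    ⟨p.bypass, p.bypass_isPath, (p.edges_bypass_sublist_edges.map c).nodup hp⟩
  intro u v
  rcases lt_trichotomy u v with huv | rfl | hvu
  · obtain ⟨p, hp⟩ := h u v huv
    exact of_walk p hp
  · exact ⟨.nil, .nil, by simp⟩
  · obtain ⟨p, hp⟩ := h v u hvu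
    exact of_walk p.reverse (by simpa [Walk.edges_reverse] using hp)

lemma IsRainbowColoring.connected {α : Type*} [Nonempty V] {c : Sym2 V → α}
    (hc : IsRainbowColoring G c) : G.Connected :=
  ⟨fun u v => (hc u v).elim fun p _ => p.reachable⟩

lemma IsRainbowColoring.exists_fin_coloring {c : Sym2 V → ℕ} {t : ℕ} (ht : 0 < t)
    (hc : IsRainbowColoring G c) (hlt : ∀ e ∈ G.edgeSet, c e < t) :
    ∃ c' : Sym2 V → Fin t, IsRainbowColoring G c' := by
  refine ⟨fun e => ⟨c e % t, Nat.mod_lt _ ht⟩, fun u v => ?_⟩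
  obtain ⟨p, hp, hnd⟩ := hc u v
  have hmod : p.edges.map (fun e => c e % t) = p.edges.map c :=
    List.map_congr_left fun e he => Nat.mod_eq_of_lt (hlt e (p.edges_subset_edgeSet he))
  refine ⟨p, hp, List.Nodup.of_map Fin.val ?_⟩
  simpa only [List.map_map, Function.comp_def, hmod] using hnd

lemma le_rc_of_le_length {t : ℕ} (hG : ∃ c : Sym2 V → Fin t, IsRainbowColoring G c) {u v : V}
    {d : ℕ} (hd : ∀ p : G.Walk u v, d ≤ p.length) : d ≤ rc G := by
  obtain ⟨c, hc⟩ : ∃ c : Sym2 V → Fin (rc G), IsRainbowColoring G c :=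
    Nat.sInf_mem (s := {t | ∃ c : Sym2 V → Fin t, IsRainbowColoring G c}) ⟨t, hG⟩
  obtain ⟨p, -, hp⟩ := hc u v
  exact (hd p).trans (by simpa using hp.length_le_card)

end SimpleGraph

open SimpleGraph

def IsChainStep (a b : ℕ) : Prop :=
  (b = a + 1 ∧ a % 3 ≠ 1) ∨ (b = a + 2 ∧ a % 3 ≠ 2)

/-- Block `i` is the 4-cycle `3i, 3i+1, 3i+3, 3i+2`, and `IsChainStep` orients its edges away
from the cut vertex `3i`. -/
def squareChain (k : ℕ) : SimpleGraph (Fin (3 * k + 1)) where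
  Adj x y := IsChainStep x y ∨ IsChainStep y x
  symm := ⟨fun _ _ => Or.symm⟩
  loopless := ⟨fun _ h => by simp only [IsChainStep] at h; omega⟩

lemma squareChain_adj {k : ℕ} {x y : Fin (3 * k + 1)} :
    (squareChain k).Adj x y ↔ IsChainStep x y ∨ IsChainStep y x := .rfl

def chainColor {n : ℕ} : Sym2 (Fin n) → ℕ :=
  Sym2.lift ⟨fun x y => 2 * (min x.val y.val / 3) + (max x.val y.val - min x.val y.val - 1),
    fun x y => by simp only [min_comm, max_comm]⟩

lemma chainColor_mk {n : ℕ} (x y : Fin n) :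
    chainColor s(x, y) = 2 * (min x.val y.val / 3) + (max x.val y.val - min x.val y.val - 1) :=
  rfl

/-- The least colour of an edge leaving `a` forward. -/
def minStepColor (a : ℕ) : ℕ := 2 * (a / 3) + if a % 3 = 1 then 1 else 0

lemma chainColor_lt {k : ℕ} {e : Sym2 (Fin (3 * k + 1))} (he : e ∈ (squareChain k).edgeSet) :
    chainColor e < 2 * k := by
  induction e using Sym2.ind with
  | _ x y =>
    rw [mem_edgeSet, squareChain_adj] at he
    simp only [IsChainStep] at he
    rw [chainColor_mk]
    omega

lemma exists_increasing_walk {k : ℕ} {u v : Fin (3 * k + 1)} (huv : u < v)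
    (hside : ¬ (u.val % 3 = 1 ∧ v.val = u.val + 1)) :
    ∃ p : (squareChain k).Walk u v, (p.edges.map chainColor).Pairwise (· < ·) ∧
      ∀ c ∈ p.edges.map chainColor, minStepColor u ≤ c := by
  rw [Fin.lt_def] at huv
  by_cases hstep : IsChainStep u v
  · have hadj : (squareChain k).Adj u v := Or.inl hstep
    refine ⟨.cons hadj .nil, by simp, ?_⟩
    simp only [IsChainStep] at hstep
    simp only [Walk.edges_cons, Walk.edges_nil, List.map_cons, List.map_nil, List.mem_singleton,
      forall_eq, chainColor_mk, minStepColor]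
    split_ifs <;> omega
  · simp only [IsChainStep] at hstep
    -- from `3i + 1` the only forward step skips to `3i + 3`
    let w : Fin (3 * k + 1) :=
      ⟨if u.val % 3 = 1 then u.val + 2 else u.val + 1, by split_ifs <;> omega⟩
    have hw : w.val = if u.val % 3 = 1 then u.val + 2 else u.val + 1 := rfl
    have huw : (squareChain k).Adj u w := by
      left; simp only [IsChainStep, hw]; split_ifs <;> omega
    have hwv : w < v := by
      rw [Fin.lt_def, hw]; split_ifs <;> omega
    have hwside : ¬ (w.val % 3 = 1 ∧ v.val = w.val + 1) := by
      rw [hw]; split_ifs <;> omega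
    obtain ⟨p, hp, hlow⟩ := exists_increasing_walk hwv hwside
    have hcolor : minStepColor u ≤ chainColor s(u, w) ∧ chainColor s(u, w) < minStepColor w := by
      simp only [chainColor_mk, minStepColor, hw]; split_ifs <;> omega
    refine ⟨.cons huw p, ?_, ?_⟩
    · simp only [Walk.edges_cons, List.map_cons, List.pairwise_cons]
      exact ⟨fun c hc => hcolor.2.trans_le (hlow c hc), hp⟩
    · simp only [Walk.edges_cons, List.map_cons, List.forall_mem_cons]
      exact ⟨hcolor.1, fun c hc => hcolor.1.trans (hcolor.2.le.trans (hlow c hc))⟩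
termination_by v.val - u.val
decreasing_by rw [Fin.lt_def] at huv; split_ifs <;> omega

lemma exists_rainbow_walk_of_lt {k : ℕ} {u v : Fin (3 * k + 1)} (huv : u < v) :
    ∃ p : (squareChain k).Walk u v, (p.edges.map chainColor).Nodup := by
  by_cases hside : u.val % 3 = 1 ∧ v.val = u.val + 1
  · let w : Fin (3 * k + 1) := ⟨u.val - 1, by omega⟩
    have huw : (squareChain k).Adj u w := Or.inr (by simp only [IsChainStep, w]; omega)
    have hwv : (squareChain k).Adj w v := Or.inl (by simp only [IsChainStep, w]; omega)
    refine ⟨.cons huw (.cons hwv .nil), ?_⟩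
    simp only [Walk.edges_cons, Walk.edges_nil, List.map_cons, List.map_nil, chainColor_mk, w,
      List.nodup_cons, List.mem_singleton, List.not_mem_nil, List.nodup_nil, not_false_eq_true,
      and_true]
    omega
  · obtain ⟨p, hp, -⟩ := exists_increasing_walk huv hside
    exact ⟨p, hp.nodup⟩

lemma isRainbowColoring_chainColor (k : ℕ) : IsRainbowColoring (squareChain k) chainColor :=
  isRainbowColoring_of_forall_lt fun _ _ => exists_rainbow_walk_of_lt

lemma rc_squareChain {k : ℕ} (hk : 0 < k) : rc (squareChain k) = 2 * k := by
  have hfin := (isRainbowColoring_chainColor k).exists_fin_coloring (by omega)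
    fun _ he => chainColor_lt he
  refine le_antisymm (Nat.sInf_le hfin) (le_rc_of_le_length hfin (u := 0) (v := Fin.last _) ?_)
  intro p
  have := p.le_add_length_of_adj (f := fun a => (2 * a.val + 1) / 3) fun x y h => by
    simp only [squareChain_adj, IsChainStep] at h
    obtain _ | _ | _ : x.val % 3 = 0 ∨ x.val % 3 = 1 ∨ x.val % 3 = 2 := by omega
    all_goals omega
  simp only [Fin.val_zero, Fin.val_last] at this
  omega

lemma not_isBridge_squareChain_of_isChainStep {k : ℕ} {x y : Fin (3 * k + 1)}
    (h : IsChainStep x y) : ¬ (squareChain k).IsBridge s(x, y) := by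
  -- the other three edges of the block of `s(x, y)` join `x` to `y`
  have around (b c : ℕ) (hb : b < 3 * k + 1) (hc : c < 3 * k + 1)
      (h : ((IsChainStep x b ∨ IsChainStep b x) ∧ (IsChainStep b c ∨ IsChainStep c b) ∧
        (IsChainStep c y ∨ IsChainStep y c)) ∧ x.val ≠ c ∧ b ≠ y.val) :
      ¬ (squareChain k).IsBridge s(x, y) :=
    not_isBridge_of_adj_of_adj_of_adj (G := squareChain k) (b := ⟨b, hb⟩) (c := ⟨c, hc⟩)
      h.1.1 h.1.2.1 h.1.2.2 (Fin.ne_of_val_ne h.2.1) (Fin.ne_of_val_ne h.2.2)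
  have hy := y.isLt
  simp only [IsChainStep] at h
  obtain ⟨hxy, hx⟩ | ⟨hxy, hx⟩ := h
  · by_cases hx0 : x.val % 3 = 0
    · exact around (x + 2) (x + 3) (by omega) (by omega) (by unfold IsChainStep; omega)
    · exact around (x - 2) (x - 1) (by omega) (by omega) (by unfold IsChainStep; omega)
  · by_cases hx0 : x.val % 3 = 0
    · exact around (x + 1) (x + 3) (by omega) (by omega) (by unfold IsChainStep; omega)
    · exact around (x - 1) (x + 1) (by omega) (by omega) (by unfold IsChainStep; omega)

lemma twoEdgeConnected_squareChain (k : ℕ) : TwoEdgeConnected (squareChain k) := by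
  have hconn := (isRainbowColoring_chainColor k).connected
  refine ⟨hconn, fun e he => ?_⟩
  induction e using Sym2.ind with
  | _ x y =>
    refine hconn.connected_delete_edge_of_not_isBridge ?_
    rcases he with h | h
    · exact not_isBridge_squareChain_of_isChainStep h
    · rw [Sym2.eq_swap]
      exact not_isBridge_squareChain_of_isChainStep h

theorem exists_tight_two_edge_connected (k : ℕ) (hk : 1 ≤ k) :
    ∃ G : SimpleGraph (Fin (3 * k + 1)), TwoEdgeConnected G ∧ rc G = 2 * k :=
  ⟨squareChain k, twoEdgeConnected_squareChain k, rc_squareChain hk⟩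
end

section
/- The odd cycle C_{2k+1} (k ≥ 1) with vertices v₀,…,v_{2k} admits the (k+1)-edge-coloring assigning color x_i to edge v_{i−1}v_i for 1 ≤ i ≤ k+1 and color x_{i−k−1} for k+2 ≤ i ≤ 2k+1; this coloring is rainbow and, for every vertex v, there is a rainbow path from v to v₀ avoiding the color x_{k+1}. -/
/-!
Colours are `0, …, k` (colour `k` is the paper's `x_{k+1}`). Walking `v₀ v₁ ⋯ v_{2k} v₀`, the
edge `v_j v_{j+1}` gets colour `j % (k + 1)`, so the colours read `0, 1, …, k, 0, 1, …, k - 1`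
and then `k - 1` on the closing edge `v_{2k} v₀`; colour `k` occurs only on `v_k v_{k+1}`. Any
arc of at most `k + 1` consecutive edges avoiding `v_{2k} v₀` is therefore rainbow. For `u ≤ v`
further apart, go from `v` up to `v_{2k}`, across to `v₀` and up to `u`: the colours are
`v - k - 1, …, k - 1` followed by `0, …, u - 1`, all distinct and all below `k`. The same two
routes from `v` to `v₀` (the direct arc when `v ≤ k`) avoid colour `k`.
-/

open SimpleGraph

def oddCycleColoring (k : ℕ) : Sym2 (Fin (2 * k + 1)) → ℕ :=
  Sym2.lift ⟨fun a b =>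
    if min a.val b.val = 0 ∧ max a.val b.val = 2 * k then (2 * k) % (k + 1)
    else (min a.val b.val) % (k + 1),
    by intro a b; simp only [min_comm, max_comm]⟩

namespace List

theorem nodup_map_mod_range' {m a d : ℕ} (hd : d ≤ m) : ((range' a d).map (· % m)).Nodup := by
  refine Nodup.map_on (fun x hx y hy hxy => Nat.mod_injOn_Ico a m ?_ ?_ hxy) nodup_range' <;>
    simp only [Finset.coe_Ico, Set.mem_Ico] <;> grind

theorem map_mod_range'_of_add_le {m a d : ℕ} (h : a + d ≤ m) :
    (range' a d).map (· % m) = range' a d := by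
  conv_rhs => rw [← map_id (range' a d)]
  exact map_congr_left fun x hx => Nat.mod_eq_of_lt (by grind)

theorem map_mod_range'_of_le {m a d : ℕ} (h : m ≤ a) (h' : a + d ≤ 2 * m) :
    (range' a d).map (· % m) = range' (a - m) d := by
  rw [← map_sub_range' h]
  exact map_congr_left fun x hx => by
    rw [mem_range'_1] at hx
    rw [Nat.mod_eq_sub_mod (by omega), Nat.mod_eq_of_lt (by omega)]

end List

namespace SimpleGraph.cycleGraph

variable {n : ℕ}

theorem adj_succ (j : ℕ) (h : j + 1 < n) : (cycleGraph n).Adj ⟨j, by omega⟩ ⟨j + 1, h⟩ :=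
  pathGraph_le_cycleGraph (by simp [pathGraph_adj])

theorem adj_zero_of_val_add_one_eq {a : Fin n} (ha : a.val + 1 = n) (ha₀ : 0 < a.val) :
    (cycleGraph n).Adj a ⟨0, by omega⟩ := by
  rw [cycleGraph_adj']
  right
  simp only [Fin.sub_def, add_zero]
  rw [show n - a.val = 1 by omega, Nat.mod_eq_of_lt (by omega)]

def arc (a : ℕ) : (d : ℕ) → (h : a + d < n) → (cycleGraph n).Walk ⟨a, by omega⟩ ⟨a + d, h⟩
  | 0, _ => .nil
  | d + 1, h => (arc a d (by omega)).concat (adj_succ (a + d) h)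

theorem map_val_support_arc (a d : ℕ) (h : a + d < n) :
    (arc a d h).support.map Fin.val = List.range' a (d + 1) := by
  induction d with
  | zero => rfl
  | succ d ih =>
    rw [arc, Walk.support_concat, List.map_append, ih, List.range'_concat (n := d + 1)]
    simp

theorem map_edges_arc {α : Type*} {c : Sym2 (Fin n) → α} {f : ℕ → α}
    (hcf : ∀ j (hj : j + 1 < n), c s(⟨j, by omega⟩, ⟨j + 1, hj⟩) = f j) (a d : ℕ) (h : a + d < n) :
    (arc a d h).edges.map c = (List.range' a d).map f := by
  induction d with
  | zero => rfl
  | succ d ih =>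
    rw [arc, Walk.edges_concat, List.concat_eq_append, List.map_append, ih, List.range'_concat]
    simp only [List.map_append, List.map_cons, List.map_nil, one_mul]
    exact congrArg (_ ++ [·]) (hcf (a + d) h)

theorem isPath_of_map_val_support_eq_range' {u v : Fin n} {p : (cycleGraph n).Walk u v} {a d : ℕ}
    (h : p.support.map Fin.val = List.range' a d) : p.IsPath :=
  Walk.IsPath.mk' (List.Nodup.of_map Fin.val (h ▸ List.nodup_range'))

end SimpleGraph.cycleGraph

namespace SimpleGraph

theorem Walk.nodup_map_edges_reverse {V α : Type*} {G : SimpleGraph V} {u v : V}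
    (p : G.Walk u v) (c : Sym2 V → α) :
    (p.reverse.edges.map c).Nodup ↔ (p.edges.map c).Nodup := by
  rw [Walk.edges_reverse, List.map_reverse, List.nodup_reverse]

theorem isRainbowColoring_of_forall_le {V α : Type*} [LinearOrder V] {G : SimpleGraph V}
    {c : Sym2 V → α} (h : ∀ u v : V, u ≤ v → ∃ p : G.Walk v u, p.IsPath ∧ (p.edges.map c).Nodup) :
    IsRainbowColoring G c := by
  intro u v
  rcases le_total u v with huv | hvu
  · obtain ⟨p, hp, hc⟩ := h u v huv
    exact ⟨p.reverse, hp.reverse, (p.nodup_map_edges_reverse c).2 hc⟩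
  · exact h v u hvu

end SimpleGraph

namespace oddCycleColoring

open SimpleGraph.cycleGraph

variable {k : ℕ}

theorem apply_succ (j : ℕ) (hj : j + 1 < 2 * k + 1) :
    oddCycleColoring k s(⟨j, by omega⟩, ⟨j + 1, hj⟩) = j % (k + 1) := by
  simp only [oddCycleColoring, Sym2.lift_mk]
  rw [if_neg (by omega), Nat.min_eq_left (by omega)]

theorem apply_last_zero (hk : 1 ≤ k) :
    oddCycleColoring k s(Fin.last (2 * k), 0) = k - 1 := by
  simp only [oddCycleColoring, Sym2.lift_mk, Fin.val_last, Fin.val_zero, Nat.min_zero,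
    Nat.max_zero, and_self, if_true]
  rw [Nat.mod_eq_sub_mod (by omega), Nat.mod_eq_of_lt (by omega)]
  omega

theorem exists_arc {u v : Fin (2 * k + 1)} (huv : u ≤ v) :
    ∃ p : (cycleGraph (2 * k + 1)).Walk u v,
      p.support.map Fin.val = List.range' u (v - u + 1) ∧
      p.edges.map (oddCycleColoring k) = (List.range' u (v - u)).map (· % (k + 1)) :=
  ⟨(arc u (v - u) (by omega)).copy rfl (Fin.ext (Nat.add_sub_cancel' huv)),
    by simp [map_val_support_arc], by simp [map_edges_arc apply_succ]⟩

theorem exists_path_through_last {u v : Fin (2 * k + 1)}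
    (huv : u.val + k + 1 ≤ v.val) :
    ∃ p : (cycleGraph (2 * k + 1)).Walk v u, p.IsPath ∧
      (p.edges.map (oddCycleColoring k)).Nodup ∧ ∀ x ∈ p.edges.map (oddCycleColoring k), x < k := by
  have hk : 1 ≤ k := by omega
  obtain ⟨q, hq_support, hq_colors⟩ := exists_arc (Fin.le_last v)
  obtain ⟨r, hr_support, hr_colors⟩ := exists_arc (Fin.zero_le u)
  have hadj : (cycleGraph (2 * k + 1)).Adj (Fin.last (2 * k)) 0 :=
    adj_zero_of_val_add_one_eq (by rw [Fin.val_last]) (by rw [Fin.val_last]; omega)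
  have h_support : (q.append (.cons hadj r)).support.map Fin.val =
      List.range' v (2 * k - v + 1) ++ List.range' 0 (u + 1) := by
    simp [Walk.support_append, hq_support, hr_support]
  have h_colors : (q.append (.cons hadj r)).edges.map (oddCycleColoring k) =
      List.range' (v - (k + 1)) (2 * k - v + 1) ++ List.range' 0 u := by
    rw [Walk.edges_append, Walk.edges_cons, List.map_append, List.map_cons, hq_colors, hr_colors,
      apply_last_zero hk, List.map_mod_range'_of_le (by omega) (by omega),
      List.map_mod_range'_of_add_le (by rw [Fin.val_zero]; omega), List.range'_concat]
    simp only [Fin.val_last, Fin.val_zero, Nat.sub_zero, List.append_assoc, List.singleton_append]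
    congr 2
    omega
  refine ⟨q.append (.cons hadj r), Walk.IsPath.mk' (List.Nodup.of_map Fin.val ?_), ?_, ?_⟩
  · rw [h_support, List.nodup_append]
    refine ⟨List.nodup_range', List.nodup_range', fun x hx y hy => ?_⟩
    rw [List.mem_range'_1] at hx hy
    omega
  · rw [h_colors, List.nodup_append]
    refine ⟨List.nodup_range', List.nodup_range', fun x hx y hy => ?_⟩
    rw [List.mem_range'_1] at hx hy
    omega
  · intro x hx
    rw [h_colors, List.mem_append, List.mem_range'_1, List.mem_range'_1] at hx
    omega

theorem exists_rainbow_path_of_le {u v : Fin (2 * k + 1)} (huv : u ≤ v) :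
    ∃ p : (cycleGraph (2 * k + 1)).Walk v u,
      p.IsPath ∧ (p.edges.map (oddCycleColoring k)).Nodup := by
  by_cases hshort : v.val - u.val ≤ k + 1
  · obtain ⟨p, hp_support, hp_colors⟩ := exists_arc huv
    refine ⟨p.reverse, (isPath_of_map_val_support_eq_range' hp_support).reverse, ?_⟩
    rw [Walk.nodup_map_edges_reverse, hp_colors]
    exact List.nodup_map_mod_range' hshort
  · obtain ⟨p, hp, hc, -⟩ := exists_path_through_last (u := u) (v := v) (by omega)
    exact ⟨p, hp, hc⟩

theorem exists_rainbow_path_to_zero_of_lt (v : Fin (2 * k + 1)) :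
    ∃ p : (cycleGraph (2 * k + 1)).Walk v 0, p.IsPath ∧
      (p.edges.map (oddCycleColoring k)).Nodup ∧ ∀ x ∈ p.edges.map (oddCycleColoring k), x < k := by
  by_cases hv : v.val ≤ k
  · obtain ⟨p, hp_support, hp_colors⟩ := exists_arc (Fin.zero_le v)
    have h_colors : p.reverse.edges.map (oddCycleColoring k) = (List.range' 0 v).reverse := by
      rw [Walk.edges_reverse, List.map_reverse, hp_colors,
        List.map_mod_range'_of_add_le (by rw [Fin.val_zero]; omega), Fin.val_zero, Nat.sub_zero]
    refine ⟨p.reverse, (isPath_of_map_val_support_eq_range' hp_support).reverse, ?_, ?_⟩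
    · rw [h_colors, List.nodup_reverse]
      exact List.nodup_range'
    · rw [h_colors]
      simp only [List.mem_reverse, List.mem_range'_1]
      omega
  · exact exists_path_through_last (by rw [Fin.val_zero]; omega)

end oddCycleColoring

theorem odd_cycle_coloring_good_general (k : ℕ) :
    IsRainbowColoring (SimpleGraph.cycleGraph (2 * k + 1)) (oddCycleColoring k) ∧
    ∀ v : Fin (2 * k + 1),
      ∃ p : (SimpleGraph.cycleGraph (2 * k + 1)).Walk v 0, p.IsPath ∧
        (p.edges.map (oddCycleColoring k)).Nodup ∧
        ∀ e ∈ p.edges, oddCycleColoring k e ≠ k := by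
  refine ⟨isRainbowColoring_of_forall_le fun _ _ => oddCycleColoring.exists_rainbow_path_of_le,
    fun v => ?_⟩
  obtain ⟨p, hp, hc, hlt⟩ := oddCycleColoring.exists_rainbow_path_to_zero_of_lt v
  exact ⟨p, hp, hc, fun e he => (hlt _ (List.mem_map_of_mem he)).ne⟩

theorem odd_cycle_coloring_good (k : ℕ) (hk : 1 ≤ k) :
    IsRainbowColoring (SimpleGraph.cycleGraph (2 * k + 1)) (oddCycleColoring k) ∧
    ∀ v : Fin (2 * k + 1),
      ∃ p : (SimpleGraph.cycleGraph (2 * k + 1)).Walk v 0, p.IsPath ∧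
        (p.edges.map (oddCycleColoring k)).Nodup ∧
        ∀ e ∈ p.edges, oddCycleColoring k e ≠ k :=
  odd_cycle_coloring_good_general k
end
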